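/- In any m-dimensional abstract rigidity matroid on K(V), for every U ⊆ V the rank of K(U) equals binom(|U|,2) if |U| ≤ m+1 and equals m|U| − binom(m+1,2) if |U| ≥ m+1. -/

import Mathlib

open Matroid Set

/-- A circuit of a matroid: a minimal dependent set. -/
def Matroid.IsCircuit' {α : Type*} (M : Matroid α) (C : Set α) : Prop :=
  M.Dep C ∧ ∀ D, D ⊂ C → M.Indep D

/-- A cocircuit: a circuit of the dual matroid. -/
def Matroid.IsCocircuit' {α : Type*} (M : Matroid α) (C : Set α) : Prop :=
  M✶.IsCircuit' C

/-- A hyperplane: a maximal subset of the ground set not containing a basis. -/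
def Matroid.IsHyperplane {α : Type*} (M : Matroid α) (H : Set α) : Prop :=
  H ⊆ M.E ∧ (¬ ∃ B ⊆ H, M.IsBase B) ∧
    ∀ H', H ⊂ H' → H' ⊆ M.E → ∃ B ⊆ H', M.IsBase B

/-- The rank of a set: the size of a largest independent subset. -/
noncomputable def Matroid.rk {α : Type*} (M : Matroid α) (X : Set α) : ℕ :=
  sSup {n | ∃ I ⊆ X, M.Indep I ∧ I.ncard = n}

/-- `cK U` is the edge set of the complete graph on the vertex set `U`. -/
def cK {V : Type*} (U : Set V) : Set (Sym2 V) :=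
  {e | ¬ e.IsDiag ∧ ∀ v ∈ e, v ∈ U}

/-- The support (set of endpoints) of an edge set. -/
def supp {V : Type*} (E : Set (Sym2 V)) : Set V := {v | ∃ e ∈ E, v ∈ e}

/-- An edge set is rigid if its closure is the complete graph on its support. -/
def Rigid {V : Type*} (A : Matroid (Sym2 V)) (E : Set (Sym2 V)) : Prop :=
  A.closure E = cK (supp E)

/-- `A` is an `m`-dimensional abstract rigidity matroid on `K(W)`. -/
def IsARMOn {V : Type*} (m : ℕ) (W : Set V) (A : Matroid (Sym2 V)) : Prop :=
  A.E = cK W ∧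
  (∀ E F : Set (Sym2 V), E ⊆ cK W → F ⊆ cK W →
    (supp E ∩ supp F).ncard < m →
    A.closure (E ∪ F) ⊆ cK (supp E) ∪ cK (supp F)) ∧
  (∀ E F : Set (Sym2 V), E ⊆ cK W → F ⊆ cK W →
    Rigid A E → Rigid A F → m ≤ (supp E ∩ supp F).ncard →
    Rigid A (E ∪ F))

/-- The star of a vertex: all edges containing it. -/
def starv {V : Type*} (v : V) : Set (Sym2 V) := {e | ¬ e.IsDiag ∧ v ∈ e}

/-- `C` is a vertex star minus `m-1` edges. -/
def IsStarMinus {V : Type*} (m : ℕ) (C : Set (Sym2 V)) : Prop :=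
  ∃ v : V, ∃ D ⊆ starv v, D.ncard = m - 1 ∧ C = starv v \ D

/-- The valence (degree) of a vertex in an edge set. -/
noncomputable def valence {V : Type*} (C : Set (Sym2 V)) (v : V) : ℕ :=
  {e ∈ C | v ∈ e}.ncard

/-- `bigstar V' = K(V) \ K(V \ V')`. -/
def bigstar {V : Type*} (V' : Set V) : Set (Sym2 V) :=
  cK (univ : Set V) \ cK (V'ᶜ)

/-- The family `H_m(V)` of unions of two complete graphs covering `V` and
meeting in `m-1` vertices. -/
def HmFam (m : ℕ) (V : Type*) : Set (Set (Sym2 V)) :=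
  {H | ∃ V₁ V₂ : Set V, V₁ ∪ V₂ = univ ∧ (V₁ ∩ V₂).ncard = m - 1 ∧
    ¬ V₁ ⊆ V₂ ∧ ¬ V₂ ⊆ V₁ ∧ H = cK V₁ ∪ cK V₂}

/-- The family `H_m^{(1)}(K(X))` of sets `Δ_v^A` relative to a vertex set `X`. -/
def Hm1Fam {V : Type*} (m : ℕ) (X : Set V) : Set (Set (Sym2 V)) :=
  {H | ∃ v ∈ X, ∃ A ⊆ X \ {v}, A.ncard = m - 1 ∧
    H = cK ({v} ∪ A) ∪ cK (X \ {v})}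

/-! Complete graphs on at most `m + 1` vertices are independent: by (C1) an edge `uw` of `K(U)`
lies outside the closure of `K(U - u) ∪ K(U - w)`, two complete graphs sharing only `|U| - 2 < m`
vertices. Once `|U| ≥ m + 1`, adding a vertex `v` raises the rank by exactly `m`: the `m` edges
joining `v` to some `W ⊆ U` with `|W| = m` are each outside the closure of `K(U)` and the others
by (C1), and together with `K(U)` they span `K(U + v)` by (C2), applied to the rigid graphs `K(U)`
and `K(W + v)` meeting in the `m` vertices of `W`. Induction on `|U|` gives the formula. -/

namespace Matroid

variable {α : Type*} {M : Matroid α} {X Y : Set α}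

lemma rk_eq_toNat_eRk (M : Matroid α) (X : Set α) : M.rk X = (M.eRk X).toNat := by
  by_cases hX : M.IsRkFinite X
  · obtain ⟨I, hI⟩ := M.exists_isBasis' X
    have hIfin : I.Finite := hX.finite_of_isBasis' hI
    have hgreatest : IsGreatest {n | ∃ J ⊆ X, M.Indep J ∧ J.ncard = n} I.ncard := by
      refine ⟨⟨I, hI.subset, hI.indep, rfl⟩, ?_⟩
      rintro _ ⟨J, hJX, hJ, rfl⟩
      have hJI : J.encard ≤ I.encard := hI.encard_eq_eRk ▸ hJ.encard_le_eRk_of_subset hJX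
      rw [← hIfin.cast_ncard_eq] at hJI
      exact (encard_le_coe_iff_finite_ncard_le.mp hJI).2
    rw [rk, hgreatest.csSup_eq, ← hI.encard_eq_eRk, ncard_def]
  · have hunbdd : ¬ BddAbove {n | ∃ J ⊆ X, M.Indep J ∧ J.ncard = n} := by
      rintro ⟨b, hb⟩
      obtain ⟨J, hJX, hJ, hJcard⟩ := le_eRk_iff.mp
        ((eRk_eq_top_iff.mpr hX).symm ▸ le_top : ((b + 1 : ℕ) : ℕ∞) ≤ M.eRk X)
      have hJfin : J.Finite := finite_of_encard_eq_coe hJcard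
      have := hb ⟨J, hJX, hJ, rfl⟩
      rw [← hJfin.cast_ncard_eq, Nat.cast_inj] at hJcard
      omega
    rw [rk, Nat.sSup_of_not_bddAbove hunbdd, eRk_eq_top_iff.mpr hX, ENat.toNat_top]

lemma eRk_union_eq_add_encard (hYfin : Y.Finite) (hYE : Y ⊆ M.E)
    (h : ∀ y ∈ Y, y ∉ M.closure (X ∪ (Y \ {y}))) :
    M.eRk (X ∪ Y) = M.eRk X + Y.encard := by
  induction Y, hYfin using Set.Finite.induction_on with
  | empty => simp
  | @insert y Y hyY _ ih =>
    have hy : y ∉ M.closure (X ∪ Y) := fun hcl => h y (mem_insert _ _) <|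
      M.closure_subset_closure (union_subset_union_right X (by simp [hyY])) hcl
    have ih' := ih ((subset_insert _ _).trans hYE) fun z hz hcl => h z (Or.inr hz) <|
      M.closure_subset_closure (union_subset_union_right X
        (sdiff_subset_sdiff_left (subset_insert _ _))) hcl
    rw [union_insert, eRk_insert_eq_add_one ⟨hYE (mem_insert _ _), hy⟩, ih',
      encard_insert_of_notMem hyY, add_assoc]

end Matroid

section CompleteGraph

variable {V : Type*} {U W X Y : Set V} {u v w : V} {E F : Set (Sym2 V)}

lemma cK_eq_image_map_val (U : Set V) :
    cK U = Sym2.map Subtype.val '' (Sym2.diagSet : Set (Sym2 U))ᶜ := by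
  ext e
  constructor
  · rintro ⟨he, hU⟩
    refine ⟨e.attachWith hU, ?_, Sym2.attachWith_map_subtypeVal hU⟩
    rwa [mem_compl_iff, Sym2.mem_diagSet, ← Sym2.isDiag_map Subtype.val_injective,
      Sym2.attachWith_map_subtypeVal]
  · rintro ⟨z, hz, rfl⟩
    refine ⟨by rwa [Sym2.isDiag_map Subtype.val_injective], fun x hx => ?_⟩
    obtain ⟨a, -, rfl⟩ := Sym2.mem_map.mp hx
    exact a.2

lemma ncard_cK (U : Set V) : (cK U).ncard = U.ncard.choose 2 := by
  rw [cK_eq_image_map_val, ncard_image_of_injective _ (Sym2.map.injective Subtype.val_injective),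
    Sym2.ncard_diagSet_compl, Nat.card_coe_set_eq]

lemma mk_mem_cK (h : u ≠ w) (hu : u ∈ U) (hw : w ∈ U) : s(u, w) ∈ cK U :=
  ⟨Sym2.mk_isDiag_iff.not.mpr h, fun x hx => by
    rcases Sym2.mem_iff.mp hx with rfl | rfl <;> assumption⟩

lemma cK_mono (h : U ⊆ W) : cK U ⊆ cK W :=
  fun _ he => ⟨he.1, fun x hx => h (he.2 x hx)⟩

lemma cK_empty : cK (∅ : Set V) = ∅ :=
  eq_empty_of_forall_notMem fun e he => Sym2.ind (fun x _ h => h.2 x (Sym2.mem_mk_left x _)) e he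

lemma supp_union : supp (E ∪ F) = supp E ∪ supp F := by
  ext x
  simp only [supp, mem_union, mem_ofPred_eq, or_and_right, exists_or]

lemma supp_subset_of_subset_cK (h : E ⊆ cK U) : supp E ⊆ U := by
  rintro x ⟨e, he, hx⟩
  exact (h he).2 x hx

lemma supp_cK (h : 2 ≤ U.ncard) : supp (cK U) = U := by
  refine (supp_subset_of_subset_cK subset_rfl).antisymm fun x hx => ?_
  obtain ⟨y, hy, hyx⟩ := exists_ne_of_one_lt_ncard h x
  exact ⟨s(y, x), mk_mem_cK hyx hy hx, Sym2.mem_mk_right y x⟩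

def fan (v : V) (W : Set V) : Set (Sym2 V) := (fun w => s(v, w)) '' W

lemma encard_fan (v : V) (W : Set V) : (fan v W).encard = W.encard :=
  (Sym2.mkEmbedding v).injective.encard_image W

lemma fan_subset_cK (hv : v ∉ W) : fan v W ⊆ cK (insert v W) := by
  rintro _ ⟨w, hw, rfl⟩
  exact mk_mem_cK (fun h => hv (h ▸ hw)) (mem_insert _ _) (Or.inr hw)

lemma cK_insert (hv : v ∉ W) : cK (insert v W) = cK W ∪ fan v W := by
  refine subset_antisymm ?_ (union_subset (cK_mono (subset_insert _ _)) (fan_subset_cK hv))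
  rintro e ⟨hdiag, he⟩
  by_cases hve : v ∈ e
  · obtain ⟨w, rfl⟩ := Sym2.mem_iff_exists.mp hve
    have hwv : w ≠ v := fun h => hdiag (Sym2.mk_isDiag_iff.mpr h.symm)
    exact Or.inr ⟨w, (he w (Sym2.mem_mk_right v w)).resolve_left hwv, rfl⟩
  · exact Or.inl ⟨hdiag, fun x hx => (he x hx).resolve_left fun h => hve (h ▸ hx)⟩

end CompleteGraph

namespace IsARMOn

variable {V : Type*} {m : ℕ} {A : Matroid (Sym2 V)} {U W X Y : Set V} {v : V}
  {E F : Set (Sym2 V)}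

lemma subset_ground (hA : IsARMOn m univ A) (U : Set V) : cK U ⊆ A.E :=
  hA.1 ▸ cK_mono (subset_univ U)

variable [Finite V]

lemma closure_union_subset (hA : IsARMOn m univ A) (hE : E ⊆ cK X) (hF : F ⊆ cK Y)
    (hXY : (X ∩ Y).ncard < m) : A.closure (E ∪ F) ⊆ cK X ∪ cK Y := by
  have hsupp : (supp E ∩ supp F).ncard < m := lt_of_le_of_lt (ncard_le_ncard
    (inter_subset_inter (supp_subset_of_subset_cK hE) (supp_subset_of_subset_cK hF))) hXY
  refine (hA.2.1 E F (hE.trans (cK_mono (subset_univ X))) (hF.trans (cK_mono (subset_univ Y)))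
    hsupp).trans (union_subset_union ?_ ?_)
  exacts [cK_mono (supp_subset_of_subset_cK hE), cK_mono (supp_subset_of_subset_cK hF)]

lemma closure_cK (hA : IsARMOn m univ A) (hm : 0 < m) (U : Set V) :
    A.closure (cK U) = cK U := by
  refine subset_antisymm ?_ (A.subset_closure _ (hA.subset_ground U))
  simpa [cK_empty] using
    hA.closure_union_subset (subset_refl (cK U)) (subset_refl (cK ∅)) (by simpa using hm)

lemma rigid_cK (hA : IsARMOn m univ A) (hm : 0 < m) (hU : 2 ≤ U.ncard) : Rigid A (cK U) := by
  rw [Rigid, supp_cK hU, hA.closure_cK hm]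

lemma indep_cK (hA : IsARMOn m univ A) (hU : U.ncard ≤ m + 1) : A.Indep (cK U) := by
  rw [Matroid.indep_iff_forall_notMem_closure_sdiff (hA.subset_ground U)]
  intro e he hcl
  induction e using Sym2.ind with | _ u w => ?_
  have huw : u ≠ w := fun h => he.1 (Sym2.mk_isDiag_iff.mpr h)
  have hu : u ∈ U := he.2 u (Sym2.mem_mk_left u w)
  have hw : w ∈ U := he.2 w (Sym2.mem_mk_right u w)
  have hsub : cK U \ {s(u, w)} ⊆ cK (U \ {u}) ∪ cK (U \ {w}) := by
    rintro f ⟨hf, hfe⟩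
    by_cases huf : u ∈ f
    · have hwf : w ∉ f := fun hwf => hfe ((Sym2.mem_and_mem_iff huw).mp ⟨huf, hwf⟩)
      exact Or.inr ⟨hf.1, fun x hx => ⟨hf.2 x hx, fun hxw => hwf (hxw ▸ hx)⟩⟩
    · exact Or.inl ⟨hf.1, fun x hx => ⟨hf.2 x hx, fun hxu => huf (hxu ▸ hx)⟩⟩
  have hcard : ((U \ {u}) ∩ (U \ {w})).ncard < m := by
    have hpair : ({u, w} : Set V) ⊆ U := insert_subset hu (singleton_subset_iff.mpr hw)
    have h2 := ncard_le_ncard hpair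
    rw [ncard_pair huw] at h2
    rw [sdiff_inter_sdiff, singleton_union, ncard_sdiff hpair, ncard_pair huw]
    omega
  rcases hA.closure_union_subset subset_rfl subset_rfl hcard (A.closure_subset_closure hsub hcl)
    with h | h
  exacts [(h.2 u (Sym2.mem_mk_left u w)).2 rfl, (h.2 w (Sym2.mem_mk_right u w)).2 rfl]

lemma closure_cK_union_fan (hA : IsARMOn m univ A) (hm : 0 < m) (hv : v ∉ U) (hWU : W ⊆ U)
    (hW : W.ncard = m) (hU : m + 1 ≤ U.ncard) :
    A.closure (cK U ∪ fan v W) = cK (insert v U) := by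
  have hvW : v ∉ W := fun h => hv (hWU h)
  have hunion : cK U ∪ cK (insert v W) = cK U ∪ fan v W := by
    rw [cK_insert hvW, ← union_assoc, union_eq_self_of_subset_right (cK_mono hWU)]
  have hsuppW : supp (cK (insert v W)) = insert v W := by
    rw [supp_cK (by rw [ncard_insert_of_notMem hvW]; omega)]
  have hsuppU : supp (cK U) = U := supp_cK (by omega)
  have hrigid := hA.2.2 _ _ (cK_mono (subset_univ U)) (cK_mono (subset_univ _))
    (hA.rigid_cK hm (by omega)) (hA.rigid_cK hm (by rw [ncard_insert_of_notMem hvW]; omega))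
    (by rw [hsuppU, hsuppW, inter_insert_of_notMem hv, inter_eq_right.mpr hWU, hW])
  rwa [Rigid, supp_union, hsuppU, hsuppW, union_insert, union_eq_self_of_subset_right hWU,
    hunion] at hrigid

lemma eRk_cK_union_fan (hA : IsARMOn m univ A) (hv : v ∉ U) (hWU : W ⊆ U) (hW : W.ncard = m) :
    A.eRk (cK U ∪ fan v W) = A.eRk (cK U) + m := by
  have hvW : v ∉ W := fun h => hv (hWU h)
  rw [Matroid.eRk_union_eq_add_encard (toFinite _)
    ((fan_subset_cK hvW).trans (hA.subset_ground _)), encard_fan, ← (toFinite W).cast_ncard_eq,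
    hW]
  rintro _ ⟨w, hw, rfl⟩ hcl
  have hsub : fan v W \ {s(v, w)} ⊆ cK (insert v (W \ {w})) := by
    rintro _ ⟨⟨x, hx, rfl⟩, hne⟩
    have hxw : x ≠ w := fun h => hne (h ▸ rfl)
    exact fan_subset_cK (fun h => hvW h.1) ⟨x, ⟨hx, hxw⟩, rfl⟩
  have hcard : (U ∩ insert v (W \ {w})).ncard < m := by
    have hpos : 0 < W.ncard := (ncard_pos (toFinite W)).mpr ⟨w, hw⟩
    rw [inter_insert_of_notMem hv, inter_eq_right.mpr (sdiff_subset.trans hWU),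
      ncard_sdiff_singleton_of_mem hw]
    omega
  rcases hA.closure_union_subset subset_rfl hsub hcard hcl with h | h
  · exact hv (h.2 v (Sym2.mem_mk_left v w))
  · rcases h.2 w (Sym2.mem_mk_right v w) with rfl | h'
    exacts [hvW hw, h'.2 rfl]

lemma eRk_cK_insert (hA : IsARMOn m univ A) (hm : 0 < m) (hv : v ∉ U) (hU : m + 1 ≤ U.ncard) :
    A.eRk (cK (insert v U)) = A.eRk (cK U) + m := by
  obtain ⟨W, hWU, hW⟩ := exists_subset_card_eq (show m ≤ U.ncard by omega)
  rw [← hA.closure_cK_union_fan hm hv hWU hW hU, Matroid.eRk_closure_eq,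
    hA.eRk_cK_union_fan hv hWU hW]

lemma eRk_cK_of_ncard_le (hA : IsARMOn m univ A) (hU : U.ncard ≤ m + 1) :
    A.eRk (cK U) = U.ncard.choose 2 := by
  rw [(hA.indep_cK hU).eRk_eq_encard, ← (toFinite _).cast_ncard_eq, ncard_cK]

lemma eRk_cK_of_le_ncard (hA : IsARMOn m univ A) (hm : 0 < m) (hU : m + 1 ≤ U.ncard) :
    A.eRk (cK U) = (m * U.ncard - (m + 1).choose 2 : ℕ) := by
  have hchoose : m * (m + 1) = (m + 1).choose 2 * 2 := by
    rw [mul_comm]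
    simpa using Nat.add_one_mul_choose_eq m 1
  suffices ∀ n, m + 1 ≤ n → ∀ U : Set V, U.ncard = n →
      A.eRk (cK U) = (m * n - (m + 1).choose 2 : ℕ) from this _ hU U rfl
  intro n hn
  induction n, hn using Nat.le_induction with
  | base =>
    intro U hU
    rw [hA.eRk_cK_of_ncard_le hU.le, hU, Nat.cast_inj]
    omega
  | succ n hn ih =>
    intro U hU
    obtain ⟨v, hv⟩ := nonempty_of_ncard_ne_zero (show U.ncard ≠ 0 by omega)
    have hUv : (U \ {v}).ncard = n := by rw [ncard_sdiff_singleton_of_mem hv]; omega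
    have hstep := hA.eRk_cK_insert hm (fun h => h.2 rfl) (hUv ▸ hn)
    rw [insert_sdiff_self_of_mem hv, ih _ hUv] at hstep
    rw [hstep, ← Nat.cast_add, Nat.cast_inj, mul_add_one]
    have : m * (m + 1) ≤ m * n := Nat.mul_le_mul_left m hn
    omega

end IsARMOn

theorem stmt_9_general {V : Type*} [Fintype V] (m : ℕ) (hm : 0 < m)
    (A : Matroid (Sym2 V)) (hA : IsARMOn m (univ : Set V) A)
    (U : Set V) :
    (U.ncard ≤ m + 1 → A.rk (cK U) = (U.ncard).choose 2) ∧
    (m + 1 ≤ U.ncard → A.rk (cK U) = m * U.ncard - (m + 1).choose 2) := by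
  refine ⟨fun hU => ?_, fun hU => ?_⟩
  · rw [A.rk_eq_toNat_eRk, hA.eRk_cK_of_ncard_le hU, ENat.toNat_natCast]
  · rw [A.rk_eq_toNat_eRk, hA.eRk_cK_of_le_ncard hm hU, ENat.toNat_natCast]

theorem stmt_9 {V : Type*} [Fintype V] [DecidableEq V] (m : ℕ) (hm : 0 < m)
    (A : Matroid (Sym2 V)) (hA : IsARMOn m (univ : Set V) A)
    (hV : m + 1 ≤ Fintype.card V) (U : Set V) :
    (U.ncard ≤ m + 1 → A.rk (cK U) = (U.ncard).choose 2) ∧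
    (m + 1 ≤ U.ncard → A.rk (cK U) = m * U.ncard - (m + 1).choose 2) :=
  stmt_9_general m hm A hA U
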